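/- For λ > 0, λ·∫₀^∞ ∫_{π/3}^{2π/3} e^{-(λ/√3)·r²·sin²φ} · r³ · cos²φ dφ dr = √3/(9λ), and λ·∫₀^∞ ∫_{π/3}^{2π/3} e^{-(λ/√3)·r²·sin²φ} · r³ · sin²φ dφ dr = √3/λ. -/

import Mathlib

/-!
Write `a = λ/√3` and `w` for the angular weight `cos²` or `sin²`. On the sector `π/3 ≤ φ ≤ 2π/3`
we have `sin² φ ≥ 3/4`, so the integrand is dominated by `exp (-(3a/4) r²) r³` and Fubini applies.
Integrating in `r` first, `∫₀^∞ exp (-c r²) r³ dr = 1/(2c²)` with `c = a sin² φ` leaves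
`(2a²)⁻¹ ∫ w φ / sin⁴ φ dφ`. For `w = cos², sin²` this is `∫ cotⁿ φ / sin² φ dφ` with `n = 2, 0`,
elementary since `(cotⁿ⁺¹)' = -(n+1) cotⁿ / sin²`, and `cot (π/3) = -cot (2π/3) = √3/3`.
-/

open Real MeasureTheory

theorem integral_exp_neg_mul_sq_mul_pow_three {c : ℝ} (hc : 0 < c) :
    ∫ r in Set.Ioi (0:ℝ), exp (-c * r ^ 2) * r ^ 3 = (2 * c ^ 2)⁻¹ := by
  have h := integral_rpow_mul_exp_neg_mul_rpow two_pos (by norm_num : (-1:ℝ) < 3) hc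
  norm_num [rpow_ofNat] at h
  convert h using 1
  · exact setIntegral_congr_fun measurableSet_Ioi fun r _ => by ring_nf
  · ring

theorem integrableOn_exp_neg_mul_sq_mul_pow_three {c : ℝ} (hc : 0 < c) :
    IntegrableOn (fun r => exp (-c * r ^ 2) * r ^ 3) (Set.Ioi 0) := by
  refine (integrableOn_rpow_mul_exp_neg_mul_sq hc (by norm_num : (-1:ℝ) < 3)).congr_fun
    (fun r _ => ?_) measurableSet_Ioi
  simp only [rpow_ofNat]
  ring

theorem sqrt_three_div_two_le_sin {φ : ℝ} (h₁ : π / 3 ≤ φ) (h₂ : φ ≤ 2 * π / 3) :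
    √3 / 2 ≤ sin φ := by
  have h : sin φ = cos |φ - π / 2| := by
    rw [cos_abs, cos_sub, cos_pi_div_two, sin_pi_div_two]; ring
  rw [h, ← cos_pi_div_six]
  apply cos_le_cos_of_nonneg_of_le_pi (abs_nonneg _) (by linarith [pi_pos])
  rw [abs_le]; constructor <;> linarith

theorem exp_neg_mul_sq_mul_sin_sq_le {a r φ : ℝ} (ha : 0 ≤ a) (h₁ : π / 3 ≤ φ)
    (h₂ : φ ≤ 2 * π / 3) : exp (-a * r ^ 2 * sin φ ^ 2) ≤ exp (-(3 * a / 4) * r ^ 2) := by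
  have hsin : 3 / 4 ≤ sin φ ^ 2 := by
    have h := sqrt_three_div_two_le_sin h₁ h₂
    nlinarith [sq_sqrt (show (0:ℝ) ≤ 3 by norm_num), sqrt_nonneg 3]
  rw [exp_le_exp]
  nlinarith [mul_le_mul_of_nonneg_left hsin (by positivity : 0 ≤ a * r ^ 2)]

theorem integrable_exp_neg_mul_sq_mul_sin_sq_mul_pow_three {a C : ℝ} (ha : 0 < a)
    {w : ℝ → ℝ} (hw : Measurable w) (hC : ∀ φ, |w φ| ≤ C) :
    Integrable (Function.uncurry fun r φ => exp (-a * r ^ 2 * sin φ ^ 2) * r ^ 3 * w φ)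
      ((volume.restrict (Set.Ioi 0)).prod (volume.restrict (Set.Ioc (π / 3) (2 * π / 3)))) := by
  have hdom := (integrableOn_exp_neg_mul_sq_mul_pow_three (c := 3 * a / 4) (by positivity)).mul_prod
    (integrable_const C (μ := volume.restrict (Set.Ioc (π / 3) (2 * π / 3))))
  refine hdom.mono' ((Continuous.aestronglyMeasurable (by fun_prop)).mul
    (hw.comp measurable_snd).aestronglyMeasurable) ?_
  rw [Measure.prod_restrict]
  filter_upwards [ae_restrict_mem (measurableSet_Ioi.prod measurableSet_Ioc)]
    with ⟨r, φ⟩ ⟨hr, hφ₁, hφ₂⟩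
  simp only [Set.mem_Ioi] at hr
  simp only [Function.uncurry_apply_pair, norm_mul, norm_eq_abs, abs_exp,
    abs_of_pos (pow_pos hr 3)]
  exact mul_le_mul (mul_le_mul_of_nonneg_right (exp_neg_mul_sq_mul_sin_sq_le ha.le hφ₁.le hφ₂)
    (pow_pos hr 3).le) (hC φ) (abs_nonneg _) (mul_pos (exp_pos _) (pow_pos hr 3)).le

theorem integral_Ioi_intervalIntegral_exp_neg_mul_sq_mul_sin_sq {a C : ℝ} (ha : 0 < a)
    {w : ℝ → ℝ} (hw : Measurable w) (hC : ∀ φ, |w φ| ≤ C) :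
    ∫ r in Set.Ioi 0, ∫ φ in (π / 3)..(2 * π / 3), exp (-a * r ^ 2 * sin φ ^ 2) * r ^ 3 * w φ
      = (2 * a ^ 2)⁻¹ * ∫ φ in (π / 3)..(2 * π / 3), w φ / sin φ ^ 4 := by
  have hle : π / 3 ≤ 2 * π / 3 := by linarith [pi_pos]
  simp only [intervalIntegral.integral_of_le hle]
  rw [integral_integral_swap (integrable_exp_neg_mul_sq_mul_sin_sq_mul_pow_three ha hw hC),
    ← integral_const_mul]
  refine setIntegral_congr_fun measurableSet_Ioc fun φ ⟨hφ₁, hφ₂⟩ => ?_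
  have hsin : 0 < sin φ := sin_pos_of_pos_of_lt_pi (by linarith [pi_pos]) (by linarith [pi_pos])
  calc ∫ r in Set.Ioi 0, exp (-a * r ^ 2 * sin φ ^ 2) * r ^ 3 * w φ
      = (∫ r in Set.Ioi 0, exp (-(a * sin φ ^ 2) * r ^ 2) * r ^ 3) * w φ := by
        rw [← integral_mul_const]
        exact setIntegral_congr_fun measurableSet_Ioi fun r _ => by ring_nf
    _ = (2 * a ^ 2)⁻¹ * (w φ / sin φ ^ 4) := by
        rw [integral_exp_neg_mul_sq_mul_pow_three (by positivity)]
        field_simp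

theorem Real.hasDerivAt_cot {x : ℝ} (hx : sin x ≠ 0) :
    HasDerivAt cot (-(sin x ^ 2)⁻¹) x := by
  rw [show cot = fun y => cos y / sin y from funext fun y => cot_eq_cos_div_sin y]
  refine ((hasDerivAt_cos x).fun_div (hasDerivAt_sin x) hx).congr_deriv ?_
  field_simp
  linear_combination -sin_sq_add_cos_sq x

theorem integral_cot_pow_div_sin_sq {a b : ℝ} (ha : 0 < a) (hab : a ≤ b) (hb : b < π) (n : ℕ) :
    ∫ x in a..b, cot x ^ n / sin x ^ 2 = (cot a ^ (n + 1) - cot b ^ (n + 1)) / (n + 1) := by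
  have hsin : ∀ x ∈ Set.uIcc a b, sin x ≠ 0 := fun x hx => by
    rw [Set.uIcc_of_le hab] at hx
    exact (sin_pos_of_pos_of_lt_pi (by linarith [hx.1]) (by linarith [hx.2])).ne'
  have hcont : ContinuousOn cot (Set.uIcc a b) := fun x hx =>
    (hasDerivAt_cot (hsin x hx)).continuousAt.continuousWithinAt
  rw [intervalIntegral.integral_eq_sub_of_hasDerivAt (f := fun x => -cot x ^ (n + 1) / (n + 1))]
  · ring
  · intro x hx
    refine (((hasDerivAt_cot (hsin x hx)).fun_pow (n + 1)).fun_neg.div_const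
      ((n : ℝ) + 1)).congr_deriv ?_
    push_cast
    field_simp
  · exact ((hcont.pow n).div (by fun_prop) fun x hx => pow_ne_zero 2 (hsin x hx)).intervalIntegrable

theorem Real.cot_pi_div_three : cot (π / 3) = √3 / 3 := by
  rw [cot_eq_cos_div_sin, cos_pi_div_three, sin_pi_div_three]
  field_simp
  simp

theorem Real.cot_two_mul_pi_div_three : cot (2 * π / 3) = -(√3 / 3) := by
  rw [show 2 * π / 3 = π - π / 3 by ring, cot_eq_cos_div_sin, cos_pi_sub, sin_pi_sub,
    neg_div, ← cot_eq_cos_div_sin, cot_pi_div_three]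

theorem integral_cot_pow_div_sin_sq_of_even {n : ℕ} (hn : Even n) :
    ∫ φ in (π / 3)..(2 * π / 3), cot φ ^ n / sin φ ^ 2 = 2 * (√3 / 3) ^ (n + 1) / (n + 1) := by
  rw [integral_cot_pow_div_sin_sq (by positivity) (by linarith [pi_pos]) (by linarith [pi_pos]),
    cot_pi_div_three, cot_two_mul_pi_div_three, (hn.add_one).neg_pow]
  ring

theorem stmt_7 (l : ℝ) (hl : 0 < l) :
    (l * ∫ r in Set.Ioi (0:ℝ), ∫ φ in (π/3)..(2*π/3),
        Real.exp (-(l / Real.sqrt 3) * r^2 * Real.sin φ ^ 2) * r^3 * Real.cos φ ^ 2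
      = Real.sqrt 3 / (9 * l)) ∧
    (l * ∫ r in Set.Ioi (0:ℝ), ∫ φ in (π/3)..(2*π/3),
        Real.exp (-(l / Real.sqrt 3) * r^2 * Real.sin φ ^ 2) * r^3 * Real.sin φ ^ 2
      = Real.sqrt 3 / l) := by
  have ha : 0 < l / √3 := by positivity
  have hsqrt : √3 ^ 2 = 3 := sq_sqrt (by norm_num)
  constructor
  · have hw : ∀ φ, cos φ ^ 2 / sin φ ^ 4 = cot φ ^ 2 / sin φ ^ 2 := fun φ => by
      rw [cot_eq_cos_div_sin]; ring
    rw [integral_Ioi_intervalIntegral_exp_neg_mul_sq_mul_sin_sq (C := 1) ha (by fun_prop)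
      (fun φ => (abs_sq _).trans_le (cos_sq_le_one φ))]
    simp_rw [hw]
    rw [integral_cot_pow_div_sin_sq_of_even even_two, div_pow, hsqrt]
    field_simp
    linear_combination √3 * hsqrt
  · have hw : ∀ φ, sin φ ^ 2 / sin φ ^ 4 = cot φ ^ 0 / sin φ ^ 2 := fun φ => by
      rw [pow_zero, show sin φ ^ 4 = sin φ ^ 2 * sin φ ^ 2 by ring, div_self_mul_self', one_div]
    rw [integral_Ioi_intervalIntegral_exp_neg_mul_sq_mul_sin_sq (C := 1) ha (by fun_prop)
      (fun φ => (abs_sq _).trans_le (sin_sq_le_one φ))]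
    simp_rw [hw]
    rw [integral_cot_pow_div_sin_sq_of_even Even.zero, div_pow, hsqrt]
    field_simp
    ring
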